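/- Let G be the Cartesian product graph ℕ □ ℕ with every edge of length 1. Then G is 2-densely 6-path-chordal: for every cycle C in G with L(C) ≥ 6 and every vertex (p,q) of C, either (p,q) is a shortcut vertex of C or some vertex of C adjacent to (p,q) is a shortcut vertex of C. -/

import Mathlib

/-! Let `x = (p, q)` lie on a cycle `C`. If both `C`-edges at `x` are vertical, one of them crosses
the cut between two consecutive rows, and `C` must cross that cut a second time, so `C` meets row
`q` again; the straight piece of row `q` from `x` to the nearest such vertex is a strict shortcut,
since any walk in `C` that is as short would have to start with its first edge, which is not on
`C`. If `x` is a corner, with a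
horizontal `C`-edge to `a` and a vertical one to `b`, the second crossing of the column cut through
`xa` gives a `C`-vertex `(p, j)` on the column of `x`. If it lies beyond `x` or beyond `b`, the same
argument makes `x` or `b` a shortcut vertex. Otherwise `j` is the row of `b`, three sides of a unit
square lie on `C`, and as `L(C) ≥ 6` its fourth side is a strict shortcut at `a`. -/

open SimpleGraph

namespace Chordality

variable {V : Type*} {G : SimpleGraph V}

/-- The length of a walk in a graph whose edge `e` has length `ℓ e`. -/
noncomputable def wlen (ℓ : Sym2 V → ℝ) {u v : V} (w : G.Walk u v) : ℝ :=
  (w.edges.map ℓ).sum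

/-- The path metric of a metric graph: the infimum of the lengths of walks joining
two vertices. -/
noncomputable def gdist (G : SimpleGraph V) (ℓ : Sym2 V → ℝ) (u v : V) : ℝ :=
  sInf {x : ℝ | ∃ w : G.Walk u v, wlen ℓ w = x}

/-- A walk is geodesic if its length realizes the path metric between its endpoints. -/
def IsGeodesicWalk (ℓ : Sym2 V → ℝ) {u v : V} (w : G.Walk u v) : Prop :=
  wlen ℓ w = gdist G ℓ u v

/-- `G`, with edge lengths `ℓ`, is a metric graph: connected, locally finite,
with positive edge lengths. -/
def IsMetricGraph (G : SimpleGraph V) (ℓ : Sym2 V → ℝ) : Prop :=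
  G.Connected ∧ (∀ e ∈ G.edgeSet, 0 < ℓ e) ∧ ∀ v : V, (G.neighborSet v).Finite

/-- A walk lies inside the closed walk `c`. -/
def WalkIn {z u v : V} (c : G.Walk z z) (w : G.Walk u v) : Prop :=
  (∀ e ∈ w.edges, e ∈ c.edges) ∧ ∀ a ∈ w.support, a ∈ c.support

/-- The length metric `d_C` of a cycle `c`, evaluated on vertices of `c`:
the infimum of lengths of walks joining `u` and `v` inside `c`. -/
noncomputable def cdist (ℓ : Sym2 V → ℝ) {z : V} (c : G.Walk z z) (u v : V) : ℝ :=
  sInf {x : ℝ | ∃ w : G.Walk u v, WalkIn c w ∧ wlen ℓ w = x}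

/-- `σ` is a shortcut of the cycle `c`: a path joining two vertices `p, q` of `c`
with `L(σ) < d_C(p, q)`. -/
def IsShortcut (ℓ : Sym2 V → ℝ) {z p q : V} (c : G.Walk z z) (σ : G.Walk p q) : Prop :=
  σ.IsPath ∧ p ∈ c.support ∧ q ∈ c.support ∧ wlen ℓ σ < cdist ℓ c p q

/-- `σ` is a strict shortcut of `c`: a shortcut meeting `c` only at its endpoints. -/
def IsStrictShortcut (ℓ : Sym2 V → ℝ) {z p q : V} (c : G.Walk z z) (σ : G.Walk p q) : Prop :=
  IsShortcut ℓ c σ ∧ ∀ a ∈ σ.support, a ∈ c.support → a = p ∨ a = q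

/-- `v` is a shortcut vertex of `c`, i.e. an endpoint of some strict shortcut of `c`. -/
def ShortcutVertex (ℓ : Sym2 V → ℝ) {z : V} (c : G.Walk z z) (v : V) : Prop :=
  ∃ (p q : V) (σ : G.Walk p q), IsStrictShortcut ℓ c σ ∧ (v = p ∨ v = q)

/-- `v` is a shortcut vertex of `c` associated to a strict shortcut of length at most `m`. -/
def ShortcutVertexLe (ℓ : Sym2 V → ℝ) {z : V} (c : G.Walk z z) (m : ℝ) (v : V) : Prop :=
  ∃ (p q : V) (σ : G.Walk p q),
    IsStrictShortcut ℓ c σ ∧ wlen ℓ σ ≤ m ∧ (v = p ∨ v = q)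

/-- `(k,m)`-edge-chordal: every cycle of length at least `k` has a shortcut consisting of
a single edge of length at most `m`. -/
def EdgeChordal (G : SimpleGraph V) (ℓ : Sym2 V → ℝ) (k m : ℝ) : Prop :=
  ∀ (z : V) (c : G.Walk z z), c.IsCycle → k ≤ wlen ℓ c →
    ∃ (p q : V) (h : G.Adj p q),
      IsShortcut ℓ c (Walk.cons h Walk.nil) ∧ ℓ s(p, q) ≤ m

/-- `k`-path-chordal: every cycle of length at least `k` admits a shortcut. -/
def PathChordal (G : SimpleGraph V) (ℓ : Sym2 V → ℝ) (k : ℝ) : Prop :=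
  ∀ (z : V) (c : G.Walk z z), c.IsCycle → k ≤ wlen ℓ c →
    ∃ (p q : V) (σ : G.Walk p q), IsShortcut ℓ c σ

/-- `(k,m)`-path-chordal: every cycle of length at least `k` admits a shortcut of length
at most `m`. -/
def PathChordalLe (G : SimpleGraph V) (ℓ : Sym2 V → ℝ) (k m : ℝ) : Prop :=
  ∀ (z : V) (c : G.Walk z z), c.IsCycle → k ≤ wlen ℓ c →
    ∃ (p q : V) (σ : G.Walk p q), IsShortcut ℓ c σ ∧ wlen ℓ σ ≤ m

/-- `ε`-densely `(k,m)`-path-chordal: on every cycle of length at least `k`, the vertices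
that are shortcut vertices of strict shortcuts of length at most `m` form an `ε`-dense
subset of `(C, d_C)`. -/
def DenselyPathChordal (G : SimpleGraph V) (ℓ : Sym2 V → ℝ) (ε k m : ℝ) : Prop :=
  ∀ (z : V) (c : G.Walk z z), c.IsCycle → k ≤ wlen ℓ c →
    ∀ x ∈ c.support, ∃ v, ShortcutVertexLe ℓ c m v ∧ cdist ℓ c v x < ε

/-- `ε`-densely `k`-path-chordal: on every cycle of length at least `k`, the shortcut
vertices (of strict shortcuts, with no bound on their lengths) form an `ε`-dense subset
of `(C, d_C)`. -/
def DenselyKPathChordal (G : SimpleGraph V) (ℓ : Sym2 V → ℝ) (ε k : ℝ) : Prop :=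
  ∀ (z : V) (c : G.Walk z z), c.IsCycle → k ≤ wlen ℓ c →
    ∀ x ∈ c.support, ∃ v, ShortcutVertex ℓ c v ∧ cdist ℓ c v x < ε

/-- The geodesic triangle with sides `g1, g2, g3` is `δ`-thin: each side is contained in
the `δ`-neighborhood of the union of the other two sides. -/
def ThinTriangle (ℓ : Sym2 V → ℝ) (δ : ℝ) {x y z : V}
    (g1 : G.Walk x y) (g2 : G.Walk y z) (g3 : G.Walk z x) : Prop :=
  (∀ p ∈ g1.support, ∃ q, (q ∈ g2.support ∨ q ∈ g3.support) ∧ gdist G ℓ p q ≤ δ) ∧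
  (∀ p ∈ g2.support, ∃ q, (q ∈ g3.support ∨ q ∈ g1.support) ∧ gdist G ℓ p q ≤ δ) ∧
  (∀ p ∈ g3.support, ∃ q, (q ∈ g1.support ∨ q ∈ g2.support) ∧ gdist G ℓ p q ≤ δ)

/-- `G` is `δ`-hyperbolic: every geodesic triangle is `δ`-thin. -/
def Hyperbolic (G : SimpleGraph V) (ℓ : Sym2 V → ℝ) (δ : ℝ) : Prop :=
  ∀ (x y z : V) (g1 : G.Walk x y) (g2 : G.Walk y z) (g3 : G.Walk z x),
    IsGeodesicWalk ℓ g1 → IsGeodesicWalk ℓ g2 → IsGeodesicWalk ℓ g3 →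
    ThinTriangle ℓ δ g1 g2 g3

/-- The sharp hyperbolicity constant `δ(G)`. -/
noncomputable def hypConst (G : SimpleGraph V) (ℓ : Sym2 V → ℝ) : ℝ :=
  sInf {δ : ℝ | 0 ≤ δ ∧ Hyperbolic G ℓ δ}

/-- A walk lies inside the geodesic triangle with sides `g1, g2, g3`. -/
def WalkInTri {x y z u v : V} (g1 : G.Walk x y) (g2 : G.Walk y z) (g3 : G.Walk z x)
    (w : G.Walk u v) : Prop :=
  (∀ e ∈ w.edges, e ∈ g1.edges ∨ e ∈ g2.edges ∨ e ∈ g3.edges) ∧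
  ∀ a ∈ w.support, a ∈ g1.support ∨ a ∈ g2.support ∨ a ∈ g3.support

/-- The length metric `d_T` of the geodesic triangle with sides `g1, g2, g3`,
evaluated on vertices of the triangle. -/
noncomputable def tdist (ℓ : Sym2 V → ℝ) {x y z : V} (g1 : G.Walk x y) (g2 : G.Walk y z)
    (g3 : G.Walk z x) (u v : V) : ℝ :=
  sInf {r : ℝ | ∃ w : G.Walk u v, WalkInTri g1 g2 g3 w ∧ wlen ℓ w = r}

/-- `σ` is a shortcut of the geodesic triangle with sides `g1, g2, g3`: a path joining
two vertices `p, q` of the triangle with `L(σ) < d_T(p, q)`. -/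
def IsTriShortcut (ℓ : Sym2 V → ℝ) {x y z p q : V} (g1 : G.Walk x y) (g2 : G.Walk y z)
    (g3 : G.Walk z x) (σ : G.Walk p q) : Prop :=
  σ.IsPath ∧ (p ∈ g1.support ∨ p ∈ g2.support ∨ p ∈ g3.support) ∧
    (q ∈ g1.support ∨ q ∈ g2.support ∨ q ∈ g3.support) ∧
    wlen ℓ σ < tdist ℓ g1 g2 g3 p q

/-- `v` is a shortcut vertex of the triangle, associated to a shortcut of length
at most `m`. -/
def TriShortcutVertexLe (ℓ : Sym2 V → ℝ) {x y z : V} (g1 : G.Walk x y) (g2 : G.Walk y z)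
    (g3 : G.Walk z x) (m : ℝ) (v : V) : Prop :=
  ∃ (p q : V) (σ : G.Walk p q),
    IsTriShortcut ℓ g1 g2 g3 σ ∧ wlen ℓ σ ≤ m ∧ (v = p ∨ v = q)

/-- `ε`-densely `(k,m)`-path-chordal on the triangles: for every geodesic triangle of
total length at least `k`, the shortcut vertices of shortcuts of length at most `m`
form an `ε`-dense subset of `(T, d_T)`. -/
def DenselyPathChordalOnTriangles (G : SimpleGraph V) (ℓ : Sym2 V → ℝ) (ε k m : ℝ) : Prop :=
  ∀ (x y z : V) (g1 : G.Walk x y) (g2 : G.Walk y z) (g3 : G.Walk z x),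
    IsGeodesicWalk ℓ g1 → IsGeodesicWalk ℓ g2 → IsGeodesicWalk ℓ g3 →
    k ≤ wlen ℓ g1 + wlen ℓ g2 + wlen ℓ g3 →
    ∀ p, (p ∈ g1.support ∨ p ∈ g2.support ∨ p ∈ g3.support) →
      ∃ v, TriShortcutVertexLe ℓ g1 g2 g3 m v ∧ tdist ℓ g1 g2 g3 v p < ε

end Chordality

namespace Chordality

/-- The graph `ℕ`, where `n` and `n + 1` are adjacent. -/
def nline : SimpleGraph ℕ := SimpleGraph.fromRel fun a b => b = a + 1

/-- The Cartesian product graph `ℕ □ ℕ`. -/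
def GNN : SimpleGraph (ℕ × ℕ) := nline.boxProd nline

end Chordality

namespace SimpleGraph.Walk

variable {V : Type*} {G : SimpleGraph V} {z u v x : V} {c : G.Walk z z}

theorem IsCycle.exists_neighbors (hc : c.IsCycle) (hx : x ∈ c.support) :
    ∃ a b, a ≠ b ∧ s(x, a) ∈ c.edges ∧ s(x, b) ∈ c.edges := by
  obtain ⟨a, b, hab, hN⟩ := Set.ncard_eq_two.1 (hc.ncard_neighborSet_toSubgraph_eq_two hx)
  have hmem : ∀ y, y ∈ c.toSubgraph.neighborSet x → s(x, y) ∈ c.edges :=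
    fun y hy => adj_toSubgraph_iff_mem_edges.1 hy
  exact ⟨a, b, hab, hmem a (by simp [hN]), hmem b (by simp [hN])⟩

theorem IsCycle.eq_or_eq_of_mem_edges (hc : c.IsCycle) {a b y : V} (hab : a ≠ b)
    (ha : s(x, a) ∈ c.edges) (hb : s(x, b) ∈ c.edges) (hy : s(x, y) ∈ c.edges) :
    y = a ∨ y = b := by
  have hN := hc.ncard_neighborSet_toSubgraph_eq_two (c.fst_mem_support_of_mem_edges ha)
  have hsub : {a, b} ⊆ c.toSubgraph.neighborSet x := by
    rintro _ (rfl | rfl) <;> exact adj_toSubgraph_iff_mem_edges.2 ‹_›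
  have heq := Set.eq_of_subset_of_ncard_le hsub (by rw [hN, Set.ncard_pair hab])
    (Set.finite_of_ncard_ne_zero (by omega))
  have hy' : y ∈ c.toSubgraph.neighborSet x := adj_toSubgraph_iff_mem_edges.2 hy
  simpa [← heq] using hy'

theorem IsTrail.exists_walk_not_mem_edges (hc : c.IsTrail) (h : s(u, v) ∈ c.edges) :
    ∃ w : G.Walk u v, (∀ e ∈ w.edges, e ∈ c.edges) ∧ s(u, v) ∉ w.edges := by
  classical
  have hu := c.fst_mem_support_of_mem_edges h
  have hperm := c.rotate_edges u hu
  set c' := c.rotate u hu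
  have hv : v ∈ c'.support := c'.snd_mem_support_of_mem_edges (hperm.mem_iff.2 h)
  have hsplit : c'.edges = (c'.takeUntil v hv).edges ++ (c'.dropUntil v hv).edges := by
    rw [← edges_append, take_spec]
  by_cases ht : s(u, v) ∈ (c'.takeUntil v hv).edges
  · have hdisj := (List.nodup_append.1 (hsplit ▸ (hc.rotate hu).edges_nodup)).2.2 _ ht
    refine ⟨(c'.dropUntil v hv).reverse, fun e he => ?_, fun hd => ?_⟩ <;>
      rw [edges_reverse, List.mem_reverse] at *
    · exact hperm.mem_iff.1 (hsplit ▸ List.mem_append_right _ he)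
    · exact hdisj _ hd rfl
  · exact ⟨c'.takeUntil v hv, fun e he => hperm.mem_iff.1 (c'.edges_takeUntil_subset_edges hv he),
      ht⟩

theorem IsTrail.exists_other_boundary_edge (hc : c.IsTrail) (S : Set V)
    (h : s(u, v) ∈ c.edges) (hu : u ∈ S) (hv : v ∉ S) :
    ∃ a b, s(a, b) ∈ c.edges ∧ s(a, b) ≠ s(u, v) ∧ a ∈ S ∧ b ∉ S := by
  obtain ⟨w, hwc, huv⟩ := hc.exists_walk_not_mem_edges h
  obtain ⟨d, hd, hdS, hdS'⟩ := w.exists_boundary_dart S hu hv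
  have hdw : s(d.fst, d.snd) ∈ w.edges := List.mem_map_of_mem hd
  exact ⟨d.fst, d.snd, hwc _ hdw, fun heq => huv (heq ▸ hdw), hdS, hdS'⟩

theorem IsCycle.length_le_four_of_square (hc : c.IsCycle) {a w b : V}
    (hab : a ≠ b) (hxw : x ≠ w) (hxa : s(x, a) ∈ c.edges) (haw : s(a, w) ∈ c.edges)
    (hwb : s(w, b) ∈ c.edges) (hbx : s(b, x) ∈ c.edges) : c.length ≤ 4 := by
  classical
  set S : Finset V := {x, a, w, b}
  have hclosed : ∀ y y', s(y, y') ∈ c.edges → y ∈ S → y' ∈ S := by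
    intro y y' hy hyS
    simp only [S, Finset.mem_insert, Finset.mem_singleton] at hyS ⊢
    rcases hyS with rfl | rfl | rfl | rfl
    · rcases hc.eq_or_eq_of_mem_edges hab hxa (Sym2.eq_swap ▸ hbx) hy with rfl | rfl <;> simp
    · rcases hc.eq_or_eq_of_mem_edges hxw (Sym2.eq_swap ▸ hxa) haw hy with rfl | rfl <;> simp
    · rcases hc.eq_or_eq_of_mem_edges hab (Sym2.eq_swap ▸ haw) hwb hy with rfl | rfl <;> simp
    · rcases hc.eq_or_eq_of_mem_edges hxw.symm (Sym2.eq_swap ▸ hwb) hbx hy with rfl | rfl <;> simp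
  have hsupp : ∀ y ∈ c.support, y ∈ S := by
    intro y hy
    by_contra hyS
    have hx := c.fst_mem_support_of_mem_edges hxa
    have hy' : y ∈ (c.rotate x hx).support := by simpa using hy
    obtain ⟨d, hd, hdS, hdS'⟩ :=
      ((c.rotate x hx).takeUntil y hy').exists_boundary_dart (↑S) (by simp [S]) (by simpa using hyS)
    have hdc := (c.rotate_edges x hx).mem_iff.1
      ((c.rotate x hx).edges_takeUntil_subset_edges hy' (List.mem_map_of_mem hd))
    exact hdS' (hclosed _ _ hdc hdS)
  have htail : c.support.tail.toFinset ⊆ S := fun y hy =>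
    hsupp y (List.mem_of_mem_tail (List.mem_toFinset.1 hy))
  calc c.length = c.support.tail.length := by simp
    _ = c.support.tail.toFinset.card := (List.toFinset_card_of_nodup hc.support_nodup).symm
    _ ≤ S.card := Finset.card_le_card htail
    _ ≤ 4 := Finset.card_le_four

end SimpleGraph.Walk

namespace Chordality

section WalkIn

variable {V : Type*} {G : SimpleGraph V} {z u v : V}

theorem wlen_one (w : G.Walk u v) : wlen (fun _ => 1) w = w.length := by
  induction w with
  | nil => simp [wlen]
  | cons _ _ ih =>
    simp only [wlen, Walk.edges_cons, List.map_cons, List.sum_cons] at ih ⊢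
    rw [ih, Walk.length_cons]
    push_cast
    ring

theorem walkIn_nil {c : G.Walk z z} (hu : u ∈ c.support) : WalkIn c (Walk.nil : G.Walk u u) :=
  ⟨by simp, by simpa using hu⟩

theorem walkIn_toWalk {c : G.Walk z z} (h : s(u, v) ∈ c.edges) :
    WalkIn c (c.adj_of_mem_edges h).toWalk := by
  refine ⟨by simpa using h, ?_⟩
  simp only [Adj.toWalk, Walk.support_cons, Walk.support_nil, List.mem_cons,
    List.not_mem_nil, or_false]
  rintro a (rfl | rfl)
  exacts [c.fst_mem_support_of_mem_edges h, c.snd_mem_support_of_mem_edges h]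

theorem exists_walkIn (c : G.Walk z z) (hu : u ∈ c.support) (hv : v ∈ c.support) :
    ∃ w : G.Walk u v, WalkIn c w := by
  classical
  refine ⟨(c.takeUntil u hu).reverse.append (c.takeUntil v hv), fun e he => ?_, fun a ha => ?_⟩
  · rw [Walk.edges_append, Walk.edges_reverse, List.mem_append, List.mem_reverse] at he
    exact he.elim (c.edges_takeUntil_subset_edges hu ·) (c.edges_takeUntil_subset_edges hv ·)
  · rw [Walk.mem_support_append_iff, Walk.support_reverse, List.mem_reverse] at ha
    exact ha.elim (c.support_takeUntil_subset_support hu ·)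
      (c.support_takeUntil_subset_support hv ·)

theorem cdist_le_length {c : G.Walk z z} {w : G.Walk u v} (h : WalkIn c w) :
    cdist (fun _ => 1) c u v ≤ w.length :=
  csInf_le ⟨0, by rintro _ ⟨w', -, rfl⟩; rw [wlen_one]; positivity⟩ ⟨w, h, wlen_one w⟩

theorem le_cdist {c : G.Walk z z} (hu : u ∈ c.support) (hv : v ∈ c.support) {n : ℕ}
    (h : ∀ w : G.Walk u v, WalkIn c w → n ≤ w.length) : (n : ℝ) ≤ cdist (fun _ => 1) c u v := by
  obtain ⟨w, hw⟩ := exists_walkIn c hu hv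
  refine le_csInf ⟨_, w, hw, rfl⟩ ?_
  rintro _ ⟨w, hw, rfl⟩
  rw [wlen_one]
  exact_mod_cast h w hw

theorem isStrictShortcut_of_forall_walkIn {c : G.Walk z z} {σ : G.Walk u v} (hσ : σ.IsPath)
    (hu : u ∈ c.support) (hv : v ∈ c.support)
    (hinter : ∀ a ∈ σ.support, a ∈ c.support → a = u ∨ a = v)
    (hlong : ∀ w : G.Walk u v, WalkIn c w → σ.length < w.length) :
    IsStrictShortcut (fun _ => 1) c σ := by
  refine ⟨⟨hσ, hu, hv, ?_⟩, hinter⟩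
  calc wlen (fun _ => 1) σ = σ.length := wlen_one σ
    _ < (σ.length + 1 : ℕ) := by push_cast; linarith
    _ ≤ cdist (fun _ => 1) c u v := le_cdist hu hv hlong

end WalkIn

/-- `φ` certifies that the segments of the ray `L` are geodesics, and that every geodesic from
`L s` to a later point of `L` starts with the edge from `L s` to `L (s + 1)`. -/
structure IsCalibratedRay {V : Type*} (G : SimpleGraph V) (L : ℕ → V) (φ : V → ℤ) : Prop where
  adj : ∀ t, G.Adj (L t) (L (t + 1))
  apply_ray : ∀ t, φ (L t) = t
  le_add_one_of_adj : ∀ ⦃x y⦄, G.Adj x y → φ y ≤ φ x + 1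
  eq_of_adj : ∀ t y, G.Adj (L t) y → φ y = t + 1 → y = L (t + 1)

namespace IsCalibratedRay

variable {V : Type*} {G : SimpleGraph V} {L : ℕ → V} {φ : V → ℤ}

def segment (h : IsCalibratedRay G L φ) (s : ℕ) : (k : ℕ) → G.Walk (L s) (L (s + k))
  | 0 => Walk.nil
  | k + 1 => (segment h s k).concat (h.adj (s + k))

variable (h : IsCalibratedRay G L φ) {z : V} {c : G.Walk z z} {s t k : ℕ}
include h

theorem injective : Function.Injective L := fun a b hab => by
  simpa [h.apply_ray] using congrArg φ hab

theorem sub_le_length {u v : V} (w : G.Walk u v) : φ v - φ u ≤ w.length := by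
  induction w with
  | nil => simp
  | cons hadj _ ih =>
    have := h.le_add_one_of_adj hadj
    rw [Walk.length_cons]
    push_cast
    linarith

theorem length_segment : (h.segment s k).length = k := by
  induction k with
  | zero => rfl
  | succ k ih => simp [segment, ih]

theorem support_segment :
    (h.segment s k).support = (List.range (k + 1)).map fun i => L (s + i) := by
  induction k with
  | zero => rfl
  | succ k ih => simp [segment, ih, List.range_succ, add_assoc]

theorem isPath_segment : (h.segment s k).IsPath := by
  rw [Walk.isPath_def, support_segment]
  exact List.nodup_range.map fun i j hij => by simpa using h.injective hij

theorem mem_edges_of_length_le (hk : 0 < k) (w : G.Walk (L s) (L (s + k)))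
    (hw : w.length ≤ k) : s(L s, L (s + 1)) ∈ w.edges := by
  have hne : L s ≠ L (s + k) := fun heq => by have := h.injective heq; omega
  obtain ⟨y, hadj, w', rfl⟩ := Walk.exists_eq_cons_of_ne hne w
  have hlow := h.sub_le_length w'
  have hup := h.le_add_one_of_adj hadj
  rw [Walk.length_cons] at hw
  rw [h.apply_ray] at hlow hup
  obtain rfl := h.eq_of_adj s y hadj (by push_cast at hlow hup ⊢; omega)
  simp

theorem isStrictShortcut_segment (hk : 0 < k) (hs : L s ∈ c.support)
    (hsk : L (s + k) ∈ c.support) (hgap : ∀ i, 0 < i → i < k → L (s + i) ∉ c.support)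
    (hedge : s(L s, L (s + 1)) ∉ c.edges) : IsStrictShortcut (fun _ => 1) c (h.segment s k) := by
  refine isStrictShortcut_of_forall_walkIn h.isPath_segment hs hsk ?_ ?_
  · intro a ha hac
    obtain ⟨i, hi, rfl⟩ : ∃ i < k + 1, L (s + i) = a := by simpa [support_segment] using ha
    rcases Nat.eq_zero_or_pos i with rfl | hi0
    · simp
    rcases (Nat.lt_succ_iff.1 hi).lt_or_eq with hik | rfl
    · exact absurd hac (hgap i hi0 hik)
    · simp
  · intro w hw
    by_contra! hlen
    rw [h.length_segment] at hlen
    exact hedge (hw.1 _ (h.mem_edges_of_length_le hk w hlen))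

theorem shortcutVertex_of_mem_above (hs : L s ∈ c.support) (ht : L t ∈ c.support) (hst : s < t)
    (hedge : s(L s, L (s + 1)) ∉ c.edges) : ShortcutVertex (fun _ => 1) c (L s) := by
  classical
  have hex : ∃ k, 0 < k ∧ L (s + k) ∈ c.support :=
    ⟨t - s, by omega, by rwa [Nat.add_sub_cancel' hst.le]⟩
  obtain ⟨hk, hsk⟩ := Nat.find_spec hex
  have hgap : ∀ i, 0 < i → i < Nat.find hex → L (s + i) ∉ c.support :=
    fun i hi hik hic => Nat.find_min hex hik ⟨hi, hic⟩
  exact ⟨_, _, _, h.isStrictShortcut_segment hk hs hsk hgap hedge, Or.inl rfl⟩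

theorem shortcutVertex_of_mem_below (ht : L (t + 1) ∈ c.support) (hs : L s ∈ c.support)
    (hst : s ≤ t) (hedge : s(L t, L (t + 1)) ∉ c.edges) :
    ShortcutVertex (fun _ => 1) c (L (t + 1)) := by
  classical
  set m := Nat.findGreatest (fun i => L i ∈ c.support) t
  have hm : L m ∈ c.support := Nat.findGreatest_spec (P := fun i => L i ∈ c.support) hst hs
  have hmt : m ≤ t := Nat.findGreatest_le t
  have hk : m + (t + 1 - m) = t + 1 := by omega
  have hgap : ∀ i, 0 < i → i < t + 1 - m → L (m + i) ∉ c.support :=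
    fun i hi hik => Nat.findGreatest_is_greatest (P := fun i => L i ∈ c.support) (n := t)
      (by omega) (by omega)
  have hedge' : s(L m, L (m + 1)) ∉ c.edges := by
    rcases hmt.eq_or_lt with hmt | hmt
    · rwa [hmt]
    · exact fun he => hgap 1 one_pos (by omega) (c.snd_mem_support_of_mem_edges he)
  have hσ := h.isStrictShortcut_segment (by omega) hm (by rwa [hk]) hgap hedge'
  exact ⟨_, _, _, hσ, Or.inr (congrArg L hk).symm⟩

end IsCalibratedRay

theorem nline_adj {a b : ℕ} : nline.Adj a b ↔ b = a + 1 ∨ a = b + 1 := by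
  rw [nline, fromRel_adj]
  omega

theorem gnn_adj {p q p' q' : ℕ} : GNN.Adj (p, q) (p', q') ↔
    (p = p' ∧ (q' = q + 1 ∨ q = q' + 1)) ∨ (q = q' ∧ (p' = p + 1 ∨ p = p' + 1)) := by
  simp only [GNN, boxProd_adj, nline_adj]
  tauto

theorem isCalibratedRay_row (q : ℕ) :
    IsCalibratedRay GNN (fun t => (t, q)) (fun v => (v.1 : ℤ)) where
  adj t := gnn_adj.2 (by omega)
  apply_ray _ := rfl
  le_add_one_of_adj := by
    rintro ⟨_, _⟩ ⟨_, _⟩ h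
    rw [gnn_adj] at h
    omega
  eq_of_adj := by
    rintro t ⟨_, _⟩ h hy
    rw [gnn_adj] at h
    simp only [Prod.mk.injEq]
    omega

theorem isCalibratedRay_column (p : ℕ) :
    IsCalibratedRay GNN (fun t => (p, t)) (fun v => (v.2 : ℤ)) where
  adj t := gnn_adj.2 (by omega)
  apply_ray _ := rfl
  le_add_one_of_adj := by
    rintro ⟨_, _⟩ ⟨_, _⟩ h
    rw [gnn_adj] at h
    omega
  eq_of_adj := by
    rintro t ⟨_, _⟩ h hy
    rw [gnn_adj] at h
    simp only [Prod.mk.injEq]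
    omega

variable {z : ℕ × ℕ} {c : GNN.Walk z z}

theorem exists_horizontal_crossing (hc : c.IsTrail) {p p' q : ℕ}
    (h : s((p, q), (p', q)) ∈ c.edges) : ∃ j ≠ q, s((p, j), (p', j)) ∈ c.edges := by
  have hadj := gnn_adj.1 (c.adj_of_mem_edges h)
  wlog hlt : p < p' generalizing p p'
  · obtain ⟨j, hj, h'⟩ := this (Sym2.eq_swap ▸ h) (by omega) (by omega)
    exact ⟨j, hj, Sym2.eq_swap ▸ h'⟩
  obtain ⟨⟨a1, j⟩, ⟨b1, b2⟩, hab, hne, ha, hb⟩ :=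
    hc.exists_other_boundary_edge {v | v.1 ≤ p} h (by simp) (by simpa using hlt)
  simp only [Set.mem_ofPred_eq, not_le] at ha hb
  rcases gnn_adj.1 (c.adj_of_mem_edges hab) with ⟨rfl, -⟩ | ⟨rfl, hb1⟩
  · omega
  obtain ⟨rfl, rfl⟩ : a1 = p ∧ b1 = p' := by omega
  exact ⟨j, by rintro rfl; exact hne rfl, hab⟩

theorem exists_vertical_crossing (hc : c.IsTrail) {p q q' : ℕ}
    (h : s((p, q), (p, q')) ∈ c.edges) : ∃ i ≠ p, s((i, q), (i, q')) ∈ c.edges := by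
  have hadj := gnn_adj.1 (c.adj_of_mem_edges h)
  wlog hlt : q < q' generalizing q q'
  · obtain ⟨i, hi, h'⟩ := this (Sym2.eq_swap ▸ h) (by omega) (by omega)
    exact ⟨i, hi, Sym2.eq_swap ▸ h'⟩
  obtain ⟨⟨i, a2⟩, ⟨b1, b2⟩, hab, hne, ha, hb⟩ :=
    hc.exists_other_boundary_edge {v | v.2 ≤ q} h (by simp) (by simpa using hlt)
  simp only [Set.mem_ofPred_eq, not_le] at ha hb
  rcases gnn_adj.1 (c.adj_of_mem_edges hab) with ⟨rfl, hb2⟩ | ⟨rfl, -⟩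
  · obtain ⟨rfl, rfl⟩ : a2 = q ∧ b2 = q' := by omega
    exact ⟨i, by rintro rfl; exact hne rfl, hab⟩
  · omega

theorem shortcutVertex_of_vertical_edges (hc : c.IsCycle) {p q j j' : ℕ} (hjj' : j ≠ j')
    (hj : s((p, q), (p, j)) ∈ c.edges) (hj' : s((p, q), (p, j')) ∈ c.edges) :
    ShortcutVertex (fun _ => 1) c (p, q) := by
  have hside : ∀ i ≠ p, s((p, q), (i, q)) ∉ c.edges := fun i hi he => by
    rcases hc.eq_or_eq_of_mem_edges (by simpa) hj hj' he with h | h <;> simp_all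
  have hx := c.fst_mem_support_of_mem_edges hj
  obtain ⟨i, hip, hi⟩ := exists_vertical_crossing hc.isTrail hj
  have hic := c.fst_mem_support_of_mem_edges hi
  rcases hip.lt_or_gt with hlt | hgt
  · obtain ⟨p, rfl⟩ : ∃ p', p = p' + 1 := ⟨p - 1, by omega⟩
    exact (isCalibratedRay_row q).shortcutVertex_of_mem_below hx hic (by omega)
      (fun he => hside p (by omega) (Sym2.eq_swap ▸ he))
  · exact (isCalibratedRay_row q).shortcutVertex_of_mem_above hx hic hgt (hside _ (by omega))

theorem shortcutVertex_of_horizontal_edges (hc : c.IsCycle) {p q i i' : ℕ} (hii' : i ≠ i')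
    (hi : s((p, q), (i, q)) ∈ c.edges) (hi' : s((p, q), (i', q)) ∈ c.edges) :
    ShortcutVertex (fun _ => 1) c (p, q) := by
  have hside : ∀ j ≠ q, s((p, q), (p, j)) ∉ c.edges := fun j hj he => by
    rcases hc.eq_or_eq_of_mem_edges (by simpa) hi hi' he with h | h <;> simp_all
  have hx := c.fst_mem_support_of_mem_edges hi
  obtain ⟨j, hjq, hj⟩ := exists_horizontal_crossing hc.isTrail hi
  have hjc := c.fst_mem_support_of_mem_edges hj
  rcases hjq.lt_or_gt with hlt | hgt
  · obtain ⟨q, rfl⟩ : ∃ q', q = q' + 1 := ⟨q - 1, by omega⟩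
    exact (isCalibratedRay_column p).shortcutVertex_of_mem_below hx hjc (by omega)
      (fun he => hside q (by omega) (Sym2.eq_swap ▸ he))
  · exact (isCalibratedRay_column p).shortcutVertex_of_mem_above hx hjc hgt (hside _ (by omega))

theorem shortcutVertex_of_mem_edges_of_mem_above (hc : c.IsCycle) {p q j : ℕ}
    (hback : s((p, q + 1), (p, q)) ∈ c.edges) (hj : (p, j) ∈ c.support) (hqj : q + 1 < j) :
    ShortcutVertex (fun _ => 1) c (p, q + 1) := by
  by_cases hnext : s((p, q + 1), (p, q + 2)) ∈ c.edges
  · exact shortcutVertex_of_vertical_edges hc (by omega) hback hnext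
  · exact (isCalibratedRay_column p).shortcutVertex_of_mem_above
      (c.fst_mem_support_of_mem_edges hback) hj hqj hnext

theorem shortcutVertex_of_mem_edges_of_mem_below (hc : c.IsCycle) {p q j : ℕ}
    (hback : s((p, q + 1), (p, q + 2)) ∈ c.edges) (hj : (p, j) ∈ c.support) (hjq : j ≤ q) :
    ShortcutVertex (fun _ => 1) c (p, q + 1) := by
  by_cases hprev : s((p, q + 1), (p, q)) ∈ c.edges
  · exact shortcutVertex_of_vertical_edges hc (by omega) hback hprev
  · exact (isCalibratedRay_column p).shortcutVertex_of_mem_below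
      (c.fst_mem_support_of_mem_edges hback) hj hjq (fun he => hprev (Sym2.eq_swap ▸ he))

theorem exists_shortcutVertex_of_corner (hc : c.IsCycle) (hlen : 6 ≤ c.length) {p q a b : ℕ}
    (ha : s((p, q), (a, q)) ∈ c.edges) (hb : s((p, q), (p, b)) ∈ c.edges) :
    ∃ v, ShortcutVertex (fun _ => 1) c v ∧ (v = (p, q) ∨ s((p, q), v) ∈ c.edges) := by
  obtain ⟨j, hjq, hj⟩ := exists_horizontal_crossing hc.isTrail ha
  have hjc := c.fst_mem_support_of_mem_edges hj
  have hpa := gnn_adj.1 (c.adj_of_mem_edges ha)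
  have hqb := gnn_adj.1 (c.adj_of_mem_edges hb)
  by_cases hjb : j = b
  · subst hjb
    refine ⟨(a, q), ?_, Or.inr ha⟩
    have haj : s((a, q), (a, j)) ∉ c.edges := fun haj => by
      have := hc.length_le_four_of_square (by simp only [ne_eq, Prod.mk.injEq]; omega)
        (by simp only [ne_eq, Prod.mk.injEq]; omega) ha haj
        (Sym2.eq_swap ▸ hj) (Sym2.eq_swap ▸ hb)
      omega
    have hac := c.snd_mem_support_of_mem_edges ha
    have hwc := c.snd_mem_support_of_mem_edges hj
    obtain rfl | rfl : j = q + 1 ∨ q = j + 1 := by omega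
    · exact (isCalibratedRay_column a).shortcutVertex_of_mem_above hac hwc (by omega) haj
    · exact (isCalibratedRay_column a).shortcutVertex_of_mem_below hac hwc le_rfl
        (Sym2.eq_swap ▸ haj)
  obtain rfl | rfl : b = q + 1 ∨ q = b + 1 := by omega
  · rcases hjq.lt_or_gt with hlt | hgt
    · obtain ⟨q, rfl⟩ : ∃ q', q = q' + 1 := ⟨q - 1, by omega⟩
      exact ⟨_, shortcutVertex_of_mem_edges_of_mem_below hc hb hjc (by omega), Or.inl rfl⟩
    · exact ⟨_, shortcutVertex_of_mem_edges_of_mem_above hc (Sym2.eq_swap ▸ hb) hjc (by omega),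
        Or.inr hb⟩
  · rcases hjq.lt_or_gt with hlt | hgt
    · obtain ⟨b, rfl⟩ : ∃ b', b = b' + 1 := ⟨b - 1, by omega⟩
      exact ⟨_, shortcutVertex_of_mem_edges_of_mem_below hc (Sym2.eq_swap ▸ hb) hjc (by omega),
        Or.inr hb⟩
    · exact ⟨_, shortcutVertex_of_mem_edges_of_mem_above hc hb hjc hgt, Or.inl rfl⟩

theorem exists_shortcutVertex_eq_or_mem_edges (hc : c.IsCycle) (hlen : 6 ≤ c.length)
    {x : ℕ × ℕ} (hx : x ∈ c.support) :
    ∃ v, ShortcutVertex (fun _ => 1) c v ∧ (v = x ∨ s(x, v) ∈ c.edges) := by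
  obtain ⟨⟨a1, a2⟩, ⟨b1, b2⟩, hab, ha, hb⟩ := hc.exists_neighbors hx
  obtain ⟨p, q⟩ := x
  rcases gnn_adj.1 (c.adj_of_mem_edges ha) with ⟨rfl, -⟩ | ⟨rfl, -⟩ <;>
    rcases gnn_adj.1 (c.adj_of_mem_edges hb) with ⟨rfl, -⟩ | ⟨rfl, -⟩
  · exact ⟨_, shortcutVertex_of_vertical_edges hc (by simpa using hab) ha hb, Or.inl rfl⟩
  · exact exists_shortcutVertex_of_corner hc hlen hb ha
  · exact exists_shortcutVertex_of_corner hc hlen ha hb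
  · exact ⟨_, shortcutVertex_of_horizontal_edges hc (by simpa using hab) ha hb, Or.inl rfl⟩

/-- The Cartesian product graph `G = ℕ □ ℕ` with all edges of length
`1` is `2`-densely `6`-path-chordal; indeed, for every cycle `C` in `G` with `L(C) ≥ 6`
and every vertex `(p,q)` of `C`, either `(p,q)` is a shortcut vertex of `C` or some
vertex of `C` adjacent to `(p,q)` is a shortcut vertex of `C`. -/
theorem natGrid_denselyKPathChordal :
    DenselyKPathChordal GNN (fun _ => (1 : ℝ)) 2 6 ∧
    ∀ (z : ℕ × ℕ) (c : GNN.Walk z z), c.IsCycle → 6 ≤ wlen (fun _ => (1 : ℝ)) c →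
      ∀ v ∈ c.support, ShortcutVertex (fun _ => (1 : ℝ)) c v ∨
        ∃ w ∈ c.support, GNN.Adj v w ∧ ShortcutVertex (fun _ => (1 : ℝ)) c w := by
  have key : ∀ (z : ℕ × ℕ) (c : GNN.Walk z z), c.IsCycle → 6 ≤ wlen (fun _ => (1 : ℝ)) c →
      ∀ x ∈ c.support, ∃ v, ShortcutVertex (fun _ => 1) c v ∧ (v = x ∨ s(x, v) ∈ c.edges) :=
    fun z c hc hlen x hx => exists_shortcutVertex_eq_or_mem_edges hc
      (by rw [wlen_one] at hlen; exact_mod_cast hlen) hx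
  refine ⟨fun z c hc hlen x hx => ?_, fun z c hc hlen x hx => ?_⟩
  · obtain ⟨v, hv, rfl | hxv⟩ := key z c hc hlen x hx
    · have hd : cdist (fun _ => 1) c v v ≤ 0 := by simpa using cdist_le_length (walkIn_nil hx)
      exact ⟨v, hv, by linarith⟩
    · have hd : cdist (fun _ => 1) c v x ≤ 1 := by
        simpa using cdist_le_length (walkIn_toWalk (Sym2.eq_swap ▸ hxv))
      exact ⟨v, hv, by linarith⟩
  · obtain ⟨v, hv, rfl | hxv⟩ := key z c hc hlen x hx
    · exact Or.inl hv
    · exact Or.inr ⟨v, c.snd_mem_support_of_mem_edges hxv, c.adj_of_mem_edges hxv, hv⟩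

end Chordality
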